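/- In the standard path-sum snooker domination game, if Q is a standard nontrivial position with |S_Q| + |W_Q| odd, then there exists a move u such that in Q(u) the number of P₁-components is even, the number of P₄-components is even, and |S| + |W| is even (i.e., Q(u) is totally even). -/
import Mathlib


/-- Number of white (interior, unshaded) vertices of a standard path component `P_n`. -/
def whiteCount (n : ℕ) : ℕ := n - 2

/-- Number of shaded vertices of a standard path component `P_n`
(`1` for `P_1`, `2` for `P_n` with `n ≥ 2`). -/
def shadedCount (n : ℕ) : ℕ := min n 2

/-- Total number of white vertices of a standard path-sum position. -/
def totalWhite (Q : Multiset ℕ) : ℕ := (Q.map whiteCount).sum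

/-- Total number of shaded vertices of a standard path-sum position. -/
def totalShaded (Q : Multiset ℕ) : ℕ := (Q.map shadedCount).sum

/-- The position resulting from deleting, in a component `P_n` of `Q`, the vertex
with `a` vertices on one side and `b` on the other (`a + b + 1 = n`): the component
is replaced by the standard paths `P_a` and `P_b` (empty parts discarded). -/
def moveResult (Q : Multiset ℕ) (_n a b : ℕ) : Multiset ℕ :=
  Multiset.filter (fun x => 0 < x) {a, b} + Q.erase _n

/-- Next player wins the standard path-sum game from `Q`, with recursion depth
`fuel` (each move strictly decreases the total number of vertices, so
`fuel = Q.sum` suffices). The game ends, last mover winning, when no white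
vertex remains. -/
def pathNPosAux : ℕ → Multiset ℕ → Prop
  | 0, _ => False
  | fuel + 1, Q => totalWhite Q ≠ 0 ∧ ∃ n a b, n ∈ Q ∧ a + b + 1 = n ∧
      (totalWhite (moveResult Q n a b) = 0 ∨ ¬ pathNPosAux fuel (moveResult Q n a b))

/-- `Q` is an N-position of the standard path-sum game: the player to move wins. -/
def pathNPos (Q : Multiset ℕ) : Prop := pathNPosAux Q.sum Q

lemma total_eq (X : Multiset ℕ) : totalShaded X + totalWhite X = X.sum := by
  unfold totalShaded totalWhite
  rw [← Multiset.sum_map_add]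
  have h : ∀ n : ℕ, shadedCount n + whiteCount n = n := by
    intro n; simp only [shadedCount, whiteCount]; omega
  simp [h]

lemma filter_sum (a b : ℕ) : (Multiset.filter (fun x => 0 < x) ({a, b} : Multiset ℕ)).sum = a + b := by
  rcases Nat.eq_zero_or_pos a with ha | ha <;> rcases Nat.eq_zero_or_pos b with hb | hb <;>
    simp [Multiset.filter_cons, ha, hb, Multiset.filter_singleton] <;> omega

lemma sum_moveResult (Q : Multiset ℕ) (n a b : ℕ) (hn : n ∈ Q) (h : a + b + 1 = n) :
    (moveResult Q n a b).sum + 1 = Q.sum := by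
  have := Multiset.cons_erase hn
  calc (moveResult Q n a b).sum + 1
      = (a + b) + (Q.erase n).sum + 1 := by
        simp only [moveResult, Multiset.sum_add, filter_sum]
    _ = (n ::ₘ Q.erase n).sum := by simp [Multiset.sum_cons]; omega
    _ = Q.sum := by rw [this]

lemma count_moveResult (Q : Multiset ℕ) (n a b x : ℕ) :
    (moveResult Q n a b).count x =
      (Multiset.filter (fun y => 0 < y) ({a, b} : Multiset ℕ)).count x + (Q.erase n).count x := by
  simp [moveResult]

lemma sum_mod_two (Q : Multiset ℕ) (h : ∀ n ∈ Q, n = 1 ∨ n = 2 ∨ n = 4) :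
    Q.sum % 2 = Q.count 1 % 2 := by
  induction Q using Multiset.induction with
  | empty => simp
  | cons a s ih =>
    have ha := h a (Multiset.mem_cons_self a s)
    have := ih (fun n hn => h n (Multiset.mem_cons_of_mem hn))
    rcases ha with rfl | rfl | rfl <;>
      simp [Multiset.count_cons, Multiset.sum_cons] <;> omega

lemma count_erase_ne (Q : Multiset ℕ) (n x : ℕ) (h : x ≠ n) :
    (Q.erase n).count x = Q.count x := Multiset.count_erase_of_ne h _


/-- If `Q` is a standard nontrivial position with `|S_Q| + |W_Q|` odd, then there
is a move `u` such that the resulting position is totally even: the numbers of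
`P₁`-components and of `P₄`-components are even, and `|S| + |W|` is even. -/
theorem exists_totally_even_move (Q : Multiset ℕ)
    (hstd : ∀ n ∈ Q, 0 < n) (hW : totalWhite Q ≠ 0)
    (hodd : Odd (totalShaded Q + totalWhite Q)) :
    ∃ n a b, n ∈ Q ∧ a + b + 1 = n ∧
      Even ((moveResult Q n a b).count 1) ∧
      Even ((moveResult Q n a b).count 4) ∧
      Even (totalShaded (moveResult Q n a b) + totalWhite (moveResult Q n a b)) := by
  rw [total_eq] at hodd
  rw [Nat.odd_iff] at hodd
  have evenSum : ∀ n a b, n ∈ Q → a + b + 1 = n →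
      Even (totalShaded (moveResult Q n a b) + totalWhite (moveResult Q n a b)) := by
    intro n a b hn hab
    rw [total_eq, Nat.even_iff]
    have := sum_moveResult Q n a b hn hab
    omega
  rcases Nat.even_or_odd (Q.count 1) with h1 | h1 <;>
    rcases Nat.even_or_odd (Q.count 4) with h4 | h4
  · -- both even
    rw [Nat.even_iff] at h1 h4
    have hex : ∃ n ∈ Q, ¬(n = 1 ∨ n = 2 ∨ n = 4) := by
      by_contra hc
      push_neg at hc
      have := sum_mod_two Q (by
        intro n hn
        have := hc n hn
        omega)
      omega
    obtain ⟨n, hn, hn124⟩ := hex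
    push_neg at hn124
    obtain ⟨hne1, hne2, hne4⟩ := hn124
    have hnpos := hstd n hn
    by_cases hn5 : n = 5
    · subst hn5
      refine ⟨5, 2, 2, hn, rfl, ?_, ?_, evenSum 5 2 2 hn rfl⟩ <;>
        rw [count_moveResult, Nat.even_iff] <;>
        rw [count_erase_ne Q 5 _ (by decide)] <;>
        · have : (Multiset.filter (fun y => 0 < y) ({2, 2} : Multiset ℕ)) = {2, 2} := by decide
          rw [this]
          simp [Multiset.count_cons]
          omega
    · refine ⟨n, n - 1, 0, hn, by omega, ?_, ?_, evenSum n (n - 1) 0 hn (by omega)⟩ <;>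
        rw [count_moveResult, Nat.even_iff]
      · rw [count_erase_ne Q n 1 (fun h => hne1 h.symm)]
        have hf : (Multiset.filter (fun y => 0 < y) ({n - 1, 0} : Multiset ℕ)) = {n - 1} := by
          have h' : 0 < n - 1 := by omega
          simp [Multiset.filter_cons, Multiset.filter_singleton, h']
        rw [hf, Multiset.count_singleton]
        have : ¬ (1 = n - 1) := by omega
        rw [if_neg this]
        omega
      · rw [count_erase_ne Q n 4 (fun h => hne4 h.symm)]
        have hf : (Multiset.filter (fun y => 0 < y) ({n - 1, 0} : Multiset ℕ)) = {n - 1} := by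
          have h' : 0 < n - 1 := by omega
          simp [Multiset.filter_cons, Multiset.filter_singleton, h']
        rw [hf, Multiset.count_singleton]
        have : ¬ (4 = n - 1) := by omega
        rw [if_neg this]
        omega
  · -- k1 even, k4 odd: use n = 4, a = 3, b = 0
    rw [Nat.even_iff] at h1; rw [Nat.odd_iff] at h4
    have h4mem : (4 : ℕ) ∈ Q := Multiset.count_pos.mp (by omega)
    refine ⟨4, 3, 0, h4mem, rfl, ?_, ?_, evenSum 4 3 0 h4mem rfl⟩ <;>
      rw [count_moveResult, Nat.even_iff]
    · rw [count_erase_ne Q 4 1 (by decide)]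
      have : (Multiset.filter (fun y => 0 < y) ({3, 0} : Multiset ℕ)).count 1 = 0 := by decide
      omega
    · rw [Multiset.count_erase_self]
      have : (Multiset.filter (fun y => 0 < y) ({3, 0} : Multiset ℕ)).count 4 = 0 := by decide
      omega
  · -- k1 odd, k4 even: use n = 1, a = b = 0
    rw [Nat.odd_iff] at h1; rw [Nat.even_iff] at h4
    have h1mem : (1 : ℕ) ∈ Q := Multiset.count_pos.mp (by omega)
    refine ⟨1, 0, 0, h1mem, rfl, ?_, ?_, evenSum 1 0 0 h1mem rfl⟩ <;>
      rw [count_moveResult, Nat.even_iff]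
    · rw [Multiset.count_erase_self]
      have : (Multiset.filter (fun y => 0 < y) ({0, 0} : Multiset ℕ)).count 1 = 0 := by decide
      omega
    · rw [count_erase_ne Q 1 4 (by decide)]
      have : (Multiset.filter (fun y => 0 < y) ({0, 0} : Multiset ℕ)).count 4 = 0 := by decide
      omega
  · -- both odd: use n = 4, a = 1, b = 2
    rw [Nat.odd_iff] at h1 h4
    have h4mem : (4 : ℕ) ∈ Q := Multiset.count_pos.mp (by omega)
    refine ⟨4, 1, 2, h4mem, rfl, ?_, ?_, evenSum 4 1 2 h4mem rfl⟩ <;>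
      rw [count_moveResult, Nat.even_iff]
    · rw [count_erase_ne Q 4 1 (by decide)]
      have : (Multiset.filter (fun y => 0 < y) ({1, 2} : Multiset ℕ)).count 1 = 1 := by decide
      omega
    · rw [Multiset.count_erase_self]
      have : (Multiset.filter (fun y => 0 < y) ({1, 2} : Multiset ℕ)).count 4 = 0 := by decide
      omega
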